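/- Let T denote the swap operator on 𝒦⊗𝒦 for a finite-dimensional Hilbert space 𝒦, P an orthogonal projection on 𝒦, and for i,j ∈ {0,1} define R_{ij} := (1/2)[I - (-1)^i T][P⊗(I-P)][I - (-1)^j T]. Then R_{ij}† = R_{ji} and R_{ij}R_{kl} = δ_{jk}R_{il} for all i,j,k,l ∈ {0,1}. -/

import Mathlib

/-! Write `e_s = 1 - s T` for `s = ±1`. Since `T² = 1`, `e_s e_s = 2 e_s` and `e_s e_{-s} = 0`.
Since `T (A ⊗ B) = (B ⊗ A) T`, the projection `Q = P ⊗ (1 - P)` satisfies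
`Q T Q = (P (1 - P) ⊗ (1 - P) P) T = 0`, hence `Q e_s Q = Q`. Then
`R_{ij} R_{kl} = ¼ e_i Q (e_j e_k) Q e_l` is `0` for `j ≠ k` and `½ e_i Q e_l` for `j = k`. -/

open Matrix Kronecker

/-- The swap (exchange) operator on `𝒦 ⊗ 𝒦`. -/
def swapMatrix (m : Type*) [Fintype m] [DecidableEq m] : Matrix (m × m) (m × m) ℂ :=
  Matrix.of fun p q => if p.1 = q.2 ∧ p.2 = q.1 then 1 else 0

/-- `R_{ij} := (1/2)[I - (-1)^i T][P⊗(I-P)][I - (-1)^j T]`. -/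
noncomputable def Rop {m : Type*} [Fintype m] [DecidableEq m]
    (P : Matrix m m ℂ) (i j : Fin 2) : Matrix (m × m) (m × m) ℂ :=
  (2 : ℂ)⁻¹ • ((1 - ((-1 : ℂ)) ^ (i : ℕ) • swapMatrix m) * (P ⊗ₖ (1 - P)) *
    (1 - ((-1 : ℂ)) ^ (j : ℕ) • swapMatrix m))

namespace Matrix

variable {m : Type*} [Fintype m]

theorem isStarProjection_kronecker {R : Type*} [CommRing R] [StarRing R] {A B : Matrix m m R}
    (hA : IsStarProjection A) (hB : IsStarProjection B) : IsStarProjection (A ⊗ₖ B) where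
  isIdempotentElem := by
    rw [IsIdempotentElem, ← mul_kronecker_mul, hA.isIdempotentElem.eq, hB.isIdempotentElem.eq]
  isSelfAdjoint := by
    rw [IsSelfAdjoint, star_eq_conjTranspose, conjTranspose_kronecker,
      ← star_eq_conjTranspose, ← star_eq_conjTranspose, hA.isSelfAdjoint.star_eq,
      hB.isSelfAdjoint.star_eq]

variable [DecidableEq m]

theorem swapMatrix_eq_permMatrix :
    swapMatrix m = Equiv.Perm.permMatrix ℂ (Equiv.prodComm m m) := by
  ext p q
  simp [swapMatrix, Prod.ext_iff, eq_comm, and_comm]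

theorem isSelfAdjoint_swapMatrix : IsSelfAdjoint (swapMatrix m) := by
  rw [IsSelfAdjoint, star_eq_conjTranspose, swapMatrix_eq_permMatrix, conjTranspose_permMatrix]
  rfl

theorem swapMatrix_mul_self : swapMatrix m * swapMatrix m = 1 := by
  rw [swapMatrix_eq_permMatrix, ← permMatrix_mul]
  exact permMatrix_one

theorem swapMatrix_mul_kronecker (A B : Matrix m m ℂ) :
    swapMatrix m * (A ⊗ₖ B) = (B ⊗ₖ A) * swapMatrix m := by
  rw [swapMatrix_eq_permMatrix, PEquiv.toMatrix_toPEquiv_mul, PEquiv.mul_toMatrix_toPEquiv]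
  ext p q
  simp [mul_comm]

theorem kronecker_mul_swapMatrix_mul_kronecker (A B C D : Matrix m m ℂ) :
    (A ⊗ₖ B) * swapMatrix m * (C ⊗ₖ D) = ((A * D) ⊗ₖ (B * C)) * swapMatrix m := by
  rw [mul_assoc, swapMatrix_mul_kronecker, ← mul_assoc, ← mul_kronecker_mul]

end Matrix

section SignedSandwich

variable (K : Type*) {A : Type*} [Field K] [Ring A] [Algebra K A]

noncomputable def signedSandwich (T Q : A) (i j : Fin 2) : A :=
  (2 : K)⁻¹ • ((1 - (-1 : K) ^ (i : ℕ) • T) * Q * (1 - (-1 : K) ^ (j : ℕ) • T))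

variable {K}

theorem neg_one_pow_mul_self (n : ℕ) : (-1 : K) ^ n * (-1) ^ n = 1 := by
  rw [← mul_pow, neg_one_mul, neg_neg, one_pow]

theorem neg_one_pow_fin_two_of_ne {j k : Fin 2} (h : j ≠ k) :
    (-1 : K) ^ (k : ℕ) = -(-1) ^ (j : ℕ) := by
  fin_cases j <;> fin_cases k <;> simp_all

theorem one_sub_smul_mul_self {T : A} (hT : T * T = 1) {a : K} (ha : a * a = 1) :
    (1 - a • T) * (1 - a • T) = (2 : K) • (1 - a • T) := by
  rw [mul_sub, sub_mul, sub_mul, smul_mul_smul_comm, ha, hT, one_smul, one_mul, mul_one, one_mul]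
  module

theorem one_sub_smul_mul_one_add_smul {T : A} (hT : T * T = 1) {a : K} (ha : a * a = 1) :
    (1 - a • T) * (1 + a • T) = 0 := by
  rw [mul_add, sub_mul, sub_mul, smul_mul_smul_comm, ha, hT, one_smul, one_mul, mul_one, one_mul]
  module

theorem mul_one_sub_smul_mul_self {T Q : A} (hQ : IsIdempotentElem Q) (hQTQ : Q * T * Q = 0)
    (a : K) : Q * (1 - a • T) * Q = Q := by
  rw [mul_sub, sub_mul, mul_one, hQ.eq, mul_smul_comm, smul_mul_assoc, hQTQ, smul_zero, sub_zero]

theorem signedSandwich_mul [NeZero (2 : K)] {T Q : A} (hT : T * T = 1)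
    (hQ : IsIdempotentElem Q) (hQTQ : Q * T * Q = 0) (i j k l : Fin 2) :
    signedSandwich K T Q i j * signedSandwich K T Q k l =
      if j = k then signedSandwich K T Q i l else 0 := by
  set e : Fin 2 → A := fun i => 1 - (-1 : K) ^ (i : ℕ) • T
  have he : ∀ i, signedSandwich K T Q i = fun j => (2 : K)⁻¹ • (e i * Q * e j) :=
    fun _ => rfl
  simp only [he, smul_mul_smul_comm]
  split_ifs with hjk
  · subst hjk
    have hQeeQ : Q * (e j * e j) * Q = (2 : K) • Q := by
      rw [one_sub_smul_mul_self hT (neg_one_pow_mul_self _), mul_smul_comm, smul_mul_assoc,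
        mul_one_sub_smul_mul_self hQ hQTQ]
    calc (2⁻¹ * 2⁻¹ : K) • (e i * Q * e j * (e j * Q * e l))
        = (2⁻¹ * 2⁻¹ : K) • (e i * (Q * (e j * e j) * Q) * e l) := by simp only [mul_assoc]
      _ = (2 : K)⁻¹ • (e i * Q * e l) := by
        rw [hQeeQ, mul_smul_comm, smul_mul_assoc, smul_smul, mul_assoc,
          inv_mul_cancel₀ two_ne_zero, mul_one]
  · have hee : e j * e k = 0 := by
      simp only [e, neg_one_pow_fin_two_of_ne hjk, neg_smul, sub_neg_eq_add]
      exact one_sub_smul_mul_one_add_smul hT (neg_one_pow_mul_self _)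
    calc (2⁻¹ * 2⁻¹ : K) • (e i * Q * e j * (e k * Q * e l))
        = (2⁻¹ * 2⁻¹ : K) • (e i * Q * (e j * e k) * (Q * e l)) := by simp only [mul_assoc]
      _ = 0 := by rw [hee, mul_zero, zero_mul, smul_zero]

theorem star_signedSandwich [StarRing K] [StarRing A] [StarModule K A] {T Q : A}
    (hT : IsSelfAdjoint T) (hQ : IsSelfAdjoint Q) (i j : Fin 2) :
    star (signedSandwich K T Q i j) = signedSandwich K T Q j i := by
  simp only [signedSandwich, star_smul, star_mul, star_sub, star_one, hT.star_eq, hQ.star_eq,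
    star_inv₀, star_ofNat, star_pow, star_neg, mul_assoc]

end SignedSandwich

theorem Rop_eq_signedSandwich {m : Type*} [Fintype m] [DecidableEq m] (P : Matrix m m ℂ) :
    Rop P = signedSandwich ℂ (swapMatrix m) (P ⊗ₖ (1 - P)) :=
  rfl

theorem Rop_matrix_units {m : Type*} [Fintype m] [DecidableEq m]
    (P : Matrix m m ℂ) (hPadj : Pᴴ = P) (hPproj : P * P = P) :
    (∀ i j, (Rop P i j)ᴴ = Rop P j i) ∧
    (∀ i j k l, Rop P i j * Rop P k l = if j = k then Rop P i l else 0) := by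
  have hP : IsStarProjection P := ⟨hPproj, hPadj⟩
  have hQ : IsStarProjection (P ⊗ₖ (1 - P)) := isStarProjection_kronecker hP hP.one_sub
  have hQTQ : (P ⊗ₖ (1 - P)) * swapMatrix m * (P ⊗ₖ (1 - P)) = 0 := by
    rw [kronecker_mul_swapMatrix_mul_kronecker, hP.isIdempotentElem.mul_one_sub_self,
      zero_kronecker, zero_mul]
  rw [Rop_eq_signedSandwich]
  exact ⟨star_signedSandwich isSelfAdjoint_swapMatrix hQ.isSelfAdjoint,
    signedSandwich_mul swapMatrix_mul_self hQ.isIdempotentElem hQTQ⟩
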